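/- (Euler's generating function of the Eulerian polynomials.) For every real number s, the formal power series E(X) = ∑_{n≥0} A_n(s) · X^{n}/n! satisfies, in the ring of formal power series over ℝ, the identity E(X) · ( s − e^{(s−1)X} ) = (s − 1) · 1. -/

import Mathlib

/-- Number of descents of a permutation of `Fin (m+1)`: indices `i ≤ m-1` with `σ i > σ (i+1)`. -/
def descentCount {m : ℕ} (σ : Equiv.Perm (Fin (m + 1))) : ℕ :=
  (Finset.univ.filter fun i : Fin m => σ i.succ < σ i.castSucc).card

/-- The Eulerian number `A(n,k)`: number of permutations of `Fin n` with exactly `k` descents. -/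
def eulerian (n k : ℕ) : ℕ :=
  match n with
  | 0 => if k = 0 then 1 else 0
  | m + 1 => Fintype.card {σ : Equiv.Perm (Fin (m + 1)) // descentCount σ = k}

/-- The Eulerian polynomial `A_n(s) = ∑_{k=0}^{n-1} A(n,k) s^k`, with `A_0(s) = 1`,
evaluated at a real number `s`. -/
def eulerianPolyEval (n : ℕ) (s : ℝ) : ℝ :=
  match n with
  | 0 => 1
  | m + 1 => ∑ k ∈ Finset.range (m + 1), (eulerian (m + 1) k : ℝ) * s ^ k

/-- The formal power series `e^{cX} = ∑ c^m X^m / m!` over `ℝ`. -/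
noncomputable def expc (c : ℝ) : PowerSeries ℝ :=
  PowerSeries.rescale c (PowerSeries.exp ℝ)

open Finset Equiv


def wrd {n : ℕ} (τ : Equiv.Perm (Fin (n + 1))) (v : ℕ) : ℕ :=
  if h : v < n + 1 then (τ ⟨v, h⟩ : ℕ) else 0

variable {m : ℕ}

/-- insert the max value `m+1` at position `p` into the one-line notation of `τ`. -/
def insFun (τ : Equiv.Perm (Fin (m + 1))) (p : Fin (m + 2)) : Fin (m + 2) → Fin (m + 2) :=
  fun i =>
    if h : (i : ℕ) < (p : ℕ) then (τ ⟨i, by have := p.isLt; omega⟩).castSucc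
    else if h2 : (i : ℕ) = (p : ℕ) then Fin.last (m + 1)
    else (τ ⟨(i : ℕ) - 1, by have := i.isLt; omega⟩).castSucc

lemma insFun_injective (τ : Equiv.Perm (Fin (m + 1))) (p : Fin (m + 2)) :
    Function.Injective (insFun τ p) := by
  have key : ∀ {a b : Fin (m + 1)}, (τ a).castSucc = (τ b).castSucc → (a : ℕ) = (b : ℕ) :=
    fun h => congrArg Fin.val (τ.injective (Fin.castSucc_injective _ h))
  intro i j hij
  unfold insFun at hij
  have hi := i.isLt; have hj := j.isLt; have hp := p.isLt
  split_ifs at hij with h1 h2 h3 h4 h5 h6 h7 <;>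
    first
      | (exact absurd hij (Fin.castSucc_lt_last _).ne)
      | (exact absurd hij.symm (Fin.castSucc_lt_last _).ne)
      | (exact Fin.ext (by omega))
      | (have hk := key hij; simp only [] at hk; exact Fin.ext (by omega))

noncomputable def insPerm (τ : Equiv.Perm (Fin (m + 1))) (p : Fin (m + 2)) :
    Equiv.Perm (Fin (m + 2)) :=
  Equiv.ofBijective _ ((Finite.injective_iff_bijective).mp (insFun_injective τ p))

lemma insPerm_apply (τ : Equiv.Perm (Fin (m + 1))) (p : Fin (m + 2)) (i : Fin (m + 2)) :
    insPerm τ p i = insFun τ p i := rfl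

lemma wrd_insPerm (τ : Equiv.Perm (Fin (m + 1))) (p : Fin (m + 2)) (v : ℕ) (hv : v < m + 2) :
    wrd (insPerm τ p) v =
      if v < (p : ℕ) then wrd τ v
      else if v = (p : ℕ) then m + 1
      else wrd τ (v - 1) := by
  have hp := p.isLt
  rw [wrd, dif_pos hv, insPerm_apply, insFun]
  simp only [Fin.val_mk]
  split_ifs with h1 h2
  · rw [wrd, dif_pos (by omega)]
    simp [Fin.coe_castSucc]
  · simp [Fin.last]
  · rw [wrd, dif_pos (by omega)]
    simp [Fin.coe_castSucc]

lemma insPerm_inj {τ τ' : Equiv.Perm (Fin (m + 1))} {p p' : Fin (m + 2)}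
    (h : insPerm τ p = insPerm τ' p') : τ = τ' ∧ p = p' := by
  have happ : ∀ i, insFun τ p i = insFun τ' p' i := fun i => by
    rw [← insPerm_apply, ← insPerm_apply, h]
  have hp := p.isLt; have hp' := p'.isLt
  have hpp : p = p' := by
    by_contra hne
    have h1 := happ p
    rw [insFun, dif_neg (lt_irrefl _), dif_pos rfl] at h1
    rw [insFun] at h1
    split_ifs at h1 with h2 h3
    · exact absurd h1.symm (Fin.castSucc_lt_last _).ne
    · exact hne (Fin.ext h3)
    · exact absurd h1.symm (Fin.castSucc_lt_last _).ne
  refine ⟨?_, hpp⟩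
  subst hpp
  apply Equiv.ext
  intro j
  have hj := j.isLt
  rcases lt_or_ge (j : ℕ) (p : ℕ) with hlt | hge
  · have h1 := happ j.castSucc
    rw [insFun, insFun, dif_pos (by simpa using hlt), dif_pos (by simpa using hlt)] at h1
    have := Fin.castSucc_injective _ h1
    simpa [Fin.eta] using this
  · have h1 := happ j.succ
    have hcond : ¬ ((j.succ : Fin (m+2)) : ℕ) < (p : ℕ) := by simp [Fin.val_succ]; omega
    have hcond2 : ¬ ((j.succ : Fin (m+2)) : ℕ) = (p : ℕ) := by simp [Fin.val_succ]; omega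
    rw [insFun, insFun, dif_neg hcond, dif_neg hcond2, dif_neg hcond, dif_neg hcond2] at h1
    have := Fin.castSucc_injective _ h1
    simp only [Fin.val_succ, Nat.add_sub_cancel] at this
    simpa [Fin.eta] using this

noncomputable def insEquiv (m : ℕ) :
    (Equiv.Perm (Fin (m + 1)) × Fin (m + 2)) ≃ Equiv.Perm (Fin (m + 2)) :=
  Equiv.ofBijective (fun x => insPerm x.1 x.2) (by
    rw [Fintype.bijective_iff_injective_and_card]
    constructor
    · intro x y hxy
      obtain ⟨h1, h2⟩ := insPerm_inj hxy
      exact Prod.ext h1 h2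
    · simp [Fintype.card_perm, Nat.factorial_succ]
      ring)

lemma descentCount_eq_sum' {n : ℕ} (τ : Equiv.Perm (Fin (n + 1))) :
    descentCount τ = ∑ v ∈ range n, if wrd τ (v + 1) < wrd τ v then 1 else 0 := by
  rw [descentCount, card_filter, ← Fin.sum_univ_eq_sum_range]
  refine Finset.sum_congr rfl fun i _ => ?_
  have h1 : (i : ℕ) + 1 < n + 1 := by omega
  have h2 : (i : ℕ) < n + 1 := by omega
  have e1 : wrd τ ((i : ℕ) + 1) = (τ i.succ : ℕ) := by
    simp only [wrd, dif_pos h1]; rfl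
  have e2 : wrd τ (i : ℕ) = (τ i.castSucc : ℕ) := by
    simp only [wrd, dif_pos h2]; rfl
  rw [e1, e2]
  simp only [Fin.lt_iff_val_lt_val]

lemma wrd_lt' {n : ℕ} (τ : Equiv.Perm (Fin (n + 1))) (v : ℕ) (h : v < n + 1) :
    wrd τ v < n + 1 := by
  simp only [wrd, dif_pos h]
  exact (τ ⟨v, h⟩).isLt

lemma descentCount_insPerm (τ : Equiv.Perm (Fin (m + 1))) (p : Fin (m + 2)) :
    descentCount (insPerm τ p) +
      (if (p : ℕ) = m + 1 ∨ (1 ≤ (p : ℕ) ∧ wrd τ (p : ℕ) < wrd τ ((p : ℕ) - 1)) then 1 else 0)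
    = descentCount τ + 1 := by
  set q := (p : ℕ) with hq
  have hqlt : q < m + 2 := p.isLt
  set f : ℕ → ℕ := fun v => if wrd (insPerm τ p) (v + 1) < wrd (insPerm τ p) v then 1 else 0
    with hf
  set g : ℕ → ℕ := fun v => if wrd τ (v + 1) < wrd τ v then 1 else 0 with hg
  have hfg : ∀ v, v + 1 < q → f v = g v := by
    intro v hv
    simp only [hf, hg, wrd_insPerm τ p (v+1) (by omega), wrd_insPerm τ p v (by omega),
      if_pos (show v + 1 < (p : ℕ) from hv), if_pos (show v < (p : ℕ) by omega)]
  have hfq0 : ∀ v, v + 1 = q → f v = 0 := by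
    intro v hv
    have h1 : wrd (insPerm τ p) (v + 1) = m + 1 := by
      rw [wrd_insPerm τ p (v+1) (by omega), if_neg (by omega), if_pos hv]
    have h2 : wrd (insPerm τ p) v < m + 1 := by
      rw [wrd_insPerm τ p v (by omega), if_pos (by omega)]
      exact wrd_lt' τ v (by omega)
    show (if wrd (insPerm τ p) (v + 1) < wrd (insPerm τ p) v then 1 else 0) = 0
    rw [h1, if_neg (by omega)]
  have hfq1 : q ≤ m → f q = 1 := by
    intro hqm
    have h1 : wrd (insPerm τ p) q = m + 1 := by
      rw [wrd_insPerm τ p q (by omega), if_neg (by omega), if_pos rfl]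
    have h2 : wrd (insPerm τ p) (q + 1) < m + 1 := by
      rw [wrd_insPerm τ p (q+1) (by omega), if_neg (by omega), if_neg (by omega)]
      exact wrd_lt' τ q (by omega)
    show (if wrd (insPerm τ p) (q + 1) < wrd (insPerm τ p) q then 1 else 0) = 1
    rw [h1, if_pos (by omega)]
  have hfgt : ∀ v, q < v → v ≤ m → f v = g (v - 1) := by
    intro v h1 h2
    have e1 : wrd (insPerm τ p) (v + 1) = wrd τ v := by
      rw [wrd_insPerm τ p (v+1) (by omega), if_neg (by omega), if_neg (by omega)]
      simp
    have e2 : wrd (insPerm τ p) v = wrd τ (v - 1) := by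
      rw [wrd_insPerm τ p v (by omega), if_neg (by omega), if_neg (by omega)]
    have e3 : v - 1 + 1 = v := by omega
    simp only [hf, hg, e1, e2, e3]
  have hdes : descentCount (insPerm τ p) = ∑ v ∈ range (m + 1), f v := descentCount_eq_sum' _
  have hdes' : descentCount τ = ∑ v ∈ range m, g v := descentCount_eq_sum' _
  rw [hdes, hdes']
  rcases eq_or_lt_of_le (by omega : q ≤ m + 1) with hqm1 | hqm1
  · -- q = m + 1 : insertion at the very end
    rw [if_pos (Or.inl hqm1), Finset.sum_range_succ, hfq0 m (by omega),
      Finset.sum_congr rfl (fun v hv => hfg v (by simp at hv; omega))]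
  · -- q ≤ m
    have hqm : q ≤ m := by omega
    have hsplit : ∑ v ∈ range (m + 1), f v =
        (∑ v ∈ Ico 0 q, f v) + ∑ v ∈ Ico q (m + 1), f v := by
      rw [Finset.range_eq_Ico, ← Finset.sum_Ico_consecutive _ (by omega : 0 ≤ q) (by omega)]
    have htail : ∑ v ∈ Ico q (m + 1), f v = 1 + ∑ v ∈ Ico q m, g v := by
      rw [Finset.sum_eq_sum_Ico_succ_bot (by omega), hfq1 hqm]
      congr 1
      rw [Finset.sum_Ico_eq_sum_range, Finset.sum_Ico_eq_sum_range]
      have hlen : m + 1 - (q + 1) = m - q := by omega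
      rw [hlen]
      refine Finset.sum_congr rfl fun i hi => ?_
      simp only [Finset.mem_range] at hi
      rw [hfgt (q + 1 + i) (by omega) (by omega)]
      congr 1
      omega
    rcases Nat.eq_zero_or_pos q with hq0 | hq1
    · rw [if_neg (by omega)]
      rw [hsplit, htail, hq0]
      simp only [Finset.Ico_self, Finset.sum_empty]
      rw [Finset.range_eq_Ico]
      omega
    · have hhead : ∑ v ∈ Ico 0 q, f v = ∑ v ∈ Ico 0 (q - 1), g v := by
        have hq' : q - 1 + 1 = q := by omega
        rw [← hq', Finset.sum_Ico_succ_top (by omega), hq', hfq0 (q - 1) (by omega)]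
        rw [Finset.sum_congr rfl (fun v hv => hfg v (by simp at hv; omega))]
        simp
      have hd : ∑ v ∈ range m, g v =
          (∑ v ∈ Ico 0 (q - 1), g v) + (g (q - 1) + ∑ v ∈ Ico q m, g v) := by
        rw [Finset.range_eq_Ico, ← Finset.sum_Ico_consecutive _ (by omega : 0 ≤ q - 1)
          (by omega : q - 1 ≤ m), Finset.sum_eq_sum_Ico_succ_bot (by omega : q - 1 < m)]
        have h' : q - 1 + 1 = q := by omega
        rw [h']
      have hind : (if q = m + 1 ∨ (1 ≤ q ∧ wrd τ q < wrd τ (q - 1)) then 1 else 0) = g (q - 1) := by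
        simp only [hg]
        have hq' : q - 1 + 1 = q := by omega
        rw [hq']
        by_cases hc : wrd τ q < wrd τ (q - 1)
        · rw [if_pos (Or.inr ⟨hq1, hc⟩), if_pos hc]
        · have hnot : ¬(q = m + 1 ∨ (1 ≤ q ∧ wrd τ q < wrd τ (q - 1))) := by
            rintro (h | ⟨-, h⟩)
            · omega
            · exact hc h
          rw [if_neg hnot, if_neg hc]
      rw [hind, hsplit, htail, hhead, hd]
      ring


lemma descentCount_le {n : ℕ} (τ : Equiv.Perm (Fin (n + 1))) : descentCount τ ≤ n := by
  calc descentCount τ ≤ (Finset.univ : Finset (Fin n)).card := Finset.card_filter_le _ _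
  _ = n := by simp

lemma eulerian_eq_card {n k : ℕ} :
    eulerian (n + 1) k =
      ((Finset.univ : Finset (Equiv.Perm (Fin (n + 1)))).filter
        fun σ => descentCount σ = k).card := by
  simp [eulerian, Fintype.card_subtype]

open Polynomial in
noncomputable def EP (n : ℕ) : Polynomial ℝ :=
  ∑ k ∈ range (n + 1), Polynomial.C (eulerian n k : ℝ) * X ^ k

open Polynomial in
lemma EP_zero : EP 0 = 1 := by simp [EP, eulerian]

open Polynomial in
lemma EP_eq_sum (n : ℕ) :
    EP (n + 1) = ∑ τ : Equiv.Perm (Fin (n + 1)), (X : Polynomial ℝ) ^ descentCount τ := by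
  have hmaps : ∀ τ : Equiv.Perm (Fin (n + 1)), τ ∈ Finset.univ →
      descentCount τ ∈ range (n + 2) :=
    fun τ _ => Finset.mem_range.mpr (by have := descentCount_le τ; omega)
  rw [← Finset.sum_fiberwise_of_maps_to hmaps
    (fun τ => (X : Polynomial ℝ) ^ descentCount τ)]
  rw [EP]
  refine Finset.sum_congr rfl fun k _ => ?_
  rw [Finset.sum_congr rfl (fun τ hτ => by
    rw [(Finset.mem_filter.mp hτ).2])]
  rw [Finset.sum_const, eulerian_eq_card, nsmul_eq_mul, Polynomial.C_eq_natCast]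

lemma cond_count (τ : Equiv.Perm (Fin (m + 1))) :
    (∑ p : Fin (m + 2), if (p : ℕ) = m + 1 ∨ (1 ≤ (p : ℕ) ∧ wrd τ (p : ℕ) < wrd τ ((p : ℕ) - 1))
      then 1 else 0) = descentCount τ + 1 := by
  rw [Fin.sum_univ_eq_sum_range
    (fun q => if q = m + 1 ∨ (1 ≤ q ∧ wrd τ q < wrd τ (q - 1)) then 1 else 0)]
  rw [Finset.sum_range_succ, if_pos (Or.inl rfl), Finset.sum_range_succ']
  have h0 : (if (0 : ℕ) = m + 1 ∨ (1 ≤ (0:ℕ) ∧ wrd τ 0 < wrd τ (0 - 1)) then 1 else 0) = 0 := by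
    rw [if_neg]; rintro (h | ⟨h, -⟩) <;> omega
  rw [h0, descentCount_eq_sum' τ]
  have : ∀ i ∈ range m,
      (if i + 1 = m + 1 ∨ (1 ≤ i + 1 ∧ wrd τ (i + 1) < wrd τ (i + 1 - 1)) then 1 else 0) =
      (if wrd τ (i + 1) < wrd τ i then 1 else 0) := by
    intro i hi
    simp only [Finset.mem_range] at hi
    simp only [Nat.add_sub_cancel]
    by_cases hc : wrd τ (i + 1) < wrd τ i
    · rw [if_pos (Or.inr ⟨by omega, hc⟩), if_pos hc]
    · have hnot : ¬(i + 1 = m + 1 ∨ (1 ≤ i + 1 ∧ wrd τ (i + 1) < wrd τ i)) := by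
        rintro (h | ⟨-, h⟩)
        · omega
        · exact hc h
      rw [if_neg hnot, if_neg hc]
  rw [Finset.sum_congr rfl this]

open Polynomial in
lemma ins_sum (τ : Equiv.Perm (Fin (m + 1))) :
    (∑ p : Fin (m + 2), (X : Polynomial ℝ) ^ descentCount (insPerm τ p)) =
      (descentCount τ + 1) • (X : Polynomial ℝ) ^ descentCount τ +
        (m + 1 - descentCount τ) • (X : Polynomial ℝ) ^ (descentCount τ + 1) := by
  set d := descentCount τ with hd
  have hdm : d ≤ m := descentCount_le τ
  have step1 : ∀ p : Fin (m + 2),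
      (X : Polynomial ℝ) ^ descentCount (insPerm τ p) =
        if (p : ℕ) = m + 1 ∨ (1 ≤ (p : ℕ) ∧ wrd τ (p : ℕ) < wrd τ ((p : ℕ) - 1))
        then (X : Polynomial ℝ) ^ d else (X : Polynomial ℝ) ^ (d + 1) := by
    intro p
    have h := descentCount_insPerm τ p
    by_cases hc : (p : ℕ) = m + 1 ∨ (1 ≤ (p : ℕ) ∧ wrd τ (p : ℕ) < wrd τ ((p : ℕ) - 1))
    · rw [if_pos hc]
      rw [if_pos hc] at h
      exact congrArg (fun t => (X : Polynomial ℝ) ^ t) (by omega)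
    · rw [if_neg hc]
      rw [if_neg hc] at h
      exact congrArg (fun t => (X : Polynomial ℝ) ^ t) (by omega)
  rw [Finset.sum_congr rfl (fun p _ => step1 p), Finset.sum_ite, Finset.sum_const,
    Finset.sum_const]
  have hcard1 : (Finset.univ.filter fun p : Fin (m + 2) =>
      (p : ℕ) = m + 1 ∨ (1 ≤ (p : ℕ) ∧ wrd τ (p : ℕ) < wrd τ ((p : ℕ) - 1))).card = d + 1 := by
    rw [Finset.card_filter]
    exact cond_count τ
  have hcard2 : (Finset.univ.filter fun p : Fin (m + 2) =>
      ¬((p : ℕ) = m + 1 ∨ (1 ≤ (p : ℕ) ∧ wrd τ (p : ℕ) < wrd τ ((p : ℕ) - 1)))).card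
      = m + 1 - d := by
    have := Finset.card_filter_add_card_filter_not
      (s := (Finset.univ : Finset (Fin (m + 2))))
      (p := fun p : Fin (m + 2) =>
        (p : ℕ) = m + 1 ∨ (1 ≤ (p : ℕ) ∧ wrd τ (p : ℕ) < wrd τ ((p : ℕ) - 1)))
    rw [hcard1] at this
    simp only [Finset.card_univ, Fintype.card_fin] at this
    omega
  rw [hcard1, hcard2]

open Polynomial in
lemma EP_one : EP 1 = 1 := by
  rw [EP_eq_sum 0]
  have h : ∀ τ : Equiv.Perm (Fin 1), descentCount τ = 0 := by
    intro τ
    simp [descentCount]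
  rw [Finset.sum_congr rfl (fun τ _ => by rw [h τ, pow_zero])]
  rw [Finset.sum_const, Finset.card_univ, Fintype.card_perm]
  simp

open Polynomial in
lemma EP_rec (n : ℕ) :
    EP (n + 1) = (1 + (n : Polynomial ℝ) * X) * EP n +
      X * (1 - X) * derivative (EP n) := by
  cases n with
  | zero => simp [EP_one, EP_zero]
  | succ m =>
    rw [EP_eq_sum (m + 1), EP_eq_sum m]
    have he : ∀ x : Equiv.Perm (Fin (m + 1)) × Fin (m + 2),
        (X : Polynomial ℝ) ^ descentCount (insEquiv m x) =
          (X : Polynomial ℝ) ^ descentCount (insPerm x.1 x.2) := fun x => rfl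
    rw [← Equiv.sum_comp (insEquiv m)
      (fun σ => (X : Polynomial ℝ) ^ descentCount σ)]
    rw [Finset.sum_congr rfl (fun x _ => he x), Fintype.sum_prod_type]
    rw [Finset.sum_congr rfl (fun τ _ => ins_sum τ)]
    rw [map_sum, Finset.mul_sum, Finset.mul_sum, ← Finset.sum_add_distrib]
    refine Finset.sum_congr rfl fun τ _ => ?_
    have hdm : descentCount τ ≤ m := descentCount_le τ
    set d := descentCount τ with hd
    rw [derivative_X_pow]
    have hcast : ((m + 1 - d : ℕ) : Polynomial ℝ) = ((m : Polynomial ℝ) + 1) - (d : Polynomial ℝ) := by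
      push_cast [Nat.cast_sub (by omega : d ≤ m + 1)]
      ring
    rw [nsmul_eq_mul, nsmul_eq_mul, hcast]
    rw [Polynomial.C_eq_natCast]
    cases d with
    | zero => push_cast; ring
    | succ e =>
      have hx : (X : Polynomial ℝ) ^ (e + 1 - 1) = X ^ e := by norm_num
      rw [hx]
      push_cast
      ring

open Polynomial

noncomputable def TT (n : ℕ) : Polynomial ℝ :=
  ∑ k ∈ range (n + 1), ((n.choose k : ℕ) : Polynomial ℝ) * (X - 1) ^ (n - k) * EP k

noncomputable def SS (n : ℕ) : Polynomial ℝ :=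
  ∑ j ∈ range (n + 1), ((n.choose j : ℕ) : Polynomial ℝ) * (X - 1) ^ (n - j) * EP (j + 1)

noncomputable def DD (n : ℕ) : Polynomial ℝ :=
  ∑ j ∈ range (n + 2),
    (((n + 1).choose j : ℕ) : Polynomial ℝ) * (X - 1) ^ (n + 1 - j) * derivative (EP j)

lemma F1 (n : ℕ) : TT (n + 1) = (X - 1) * TT n + SS n := by
  rw [TT, Finset.sum_range_succ']
  have hterm0 : (((n + 1).choose 0 : ℕ) : Polynomial ℝ) * (X - 1) ^ (n + 1 - 0) * EP 0
      = (X - 1) ^ (n + 1) := by simp [EP_zero]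
  rw [hterm0]
  have hshift : ∀ k ∈ range (n + 1),
      (((n + 1).choose (k + 1) : ℕ) : Polynomial ℝ) * (X - 1) ^ (n + 1 - (k + 1)) * EP (k + 1)
      = ((n.choose k : ℕ) : Polynomial ℝ) * (X - 1) ^ (n - k) * EP (k + 1)
        + ((n.choose (k + 1) : ℕ) : Polynomial ℝ) * (X - 1) ^ (n - k) * EP (k + 1) := by
    intro k hk
    rw [Nat.choose_succ_succ, Nat.succ_sub_succ]
    push_cast
    ring
  rw [Finset.sum_congr rfl hshift, Finset.sum_add_distrib]
  have hSS : ∑ k ∈ range (n + 1),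
      ((n.choose k : ℕ) : Polynomial ℝ) * (X - 1) ^ (n - k) * EP (k + 1) = SS n := rfl
  rw [hSS]
  have hmul : (X - 1) * TT n =
      (∑ k ∈ range n,
        ((n.choose (k + 1) : ℕ) : Polynomial ℝ) * (X - 1) ^ (n - (k + 1)) * EP (k + 1) * (X - 1))
        + (X - 1) ^ (n + 1) := by
    rw [TT, Finset.mul_sum, Finset.sum_range_succ']
    have h0 : (X - 1) * (((n.choose 0 : ℕ) : Polynomial ℝ) * (X - 1) ^ (n - 0) * EP 0)
        = (X - 1) ^ (n + 1) := by
      simp [EP_zero]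
      ring
    rw [h0]
    congr 1
    refine Finset.sum_congr rfl fun k hk => ?_
    ring
  rw [hmul]
  have hext : ∑ k ∈ range (n + 1),
      ((n.choose (k + 1) : ℕ) : Polynomial ℝ) * (X - 1) ^ (n - k) * EP (k + 1) =
      ∑ k ∈ range n,
        ((n.choose (k + 1) : ℕ) : Polynomial ℝ) * (X - 1) ^ (n - (k + 1)) * EP (k + 1) * (X - 1)
      := by
    rw [Finset.sum_range_succ, Nat.choose_succ_self]
    push_cast
    rw [zero_mul, zero_mul, add_zero]
    refine Finset.sum_congr rfl fun k hk => ?_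
    simp only [Finset.mem_range] at hk
    have hpow : (X - 1 : Polynomial ℝ) ^ (n - k) = (X - 1) ^ (n - (k + 1)) * (X - 1) := by
      rw [← pow_succ]
      congr 1
      omega
    rw [hpow]
    ring
  rw [hext]
  ring

lemma F3 (n : ℕ) :
    ∑ j ∈ range (n + 2),
      ((j : ℕ) : Polynomial ℝ) * (((n + 1).choose j : ℕ) : Polynomial ℝ)
        * (X - 1) ^ (n + 1 - j) * EP j
      = ((n + 1 : ℕ) : Polynomial ℝ) * SS n := by
  rw [Finset.sum_range_succ']
  simp only [Nat.cast_zero, zero_mul]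
  rw [add_zero, SS, Finset.mul_sum]
  refine Finset.sum_congr rfl fun j hj => ?_
  have hnat : (j + 1) * ((n + 1).choose (j + 1)) = (n + 1) * n.choose j := by
    rw [mul_comm (j + 1) _, ← Nat.add_one_mul_choose_eq]
  have hcast : ((j : ℕ) + 1 : Polynomial ℝ) * (((n + 1).choose (j + 1) : ℕ) : Polynomial ℝ)
      = ((n + 1 : ℕ) : Polynomial ℝ) * ((n.choose j : ℕ) : Polynomial ℝ) := by
    rw [← Nat.cast_one, ← Nat.cast_add, ← Nat.cast_mul, ← Nat.cast_mul, hnat]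
  rw [Nat.succ_sub_succ]
  push_cast at hcast ⊢
  rw [show ((j : Polynomial ℝ) + 1) * ((n + 1).choose (j + 1) : ℕ) = ((n : Polynomial ℝ) + 1) * (n.choose j : ℕ) from hcast]
  ring

lemma F4 (n : ℕ) :
    derivative (TT (n + 1)) = ((n + 1 : ℕ) : Polynomial ℝ) * TT n + DD n := by
  rw [TT, map_sum, DD]
  have hterm : ∀ j ∈ range (n + 2),
      derivative ((((n + 1).choose j : ℕ) : Polynomial ℝ) * (X - 1) ^ (n + 1 - j) * EP j)
      = (((n + 1).choose j : ℕ) : Polynomial ℝ) * (((n + 1 - j : ℕ) : Polynomial ℝ)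
          * (X - 1) ^ (n - j) * EP j)
        + (((n + 1).choose j : ℕ) : Polynomial ℝ) * (X - 1) ^ (n + 1 - j) * derivative (EP j)
      := by
    intro j hj
    simp only [Finset.mem_range] at hj
    rw [derivative_mul, derivative_mul, derivative_natCast, zero_mul, zero_add,
      derivative_pow]
    have hd1 : derivative (X - 1 : Polynomial ℝ) = 1 := by
      simp
    rw [hd1, mul_one]
    rcases Nat.lt_or_ge j (n + 1) with hjn | hjn
    · have : n + 1 - j - 1 = n - j := by omega
      rw [this]
      simp only [Polynomial.C_eq_natCast]
      ring
    · have hj1 : j = n + 1 := by omega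
      subst hj1
      simp
  rw [Finset.sum_congr rfl hterm, Finset.sum_add_distrib]
  congr 1
  rw [Finset.sum_range_succ]
  have hlast : (((n + 1).choose (n + 1) : ℕ) : Polynomial ℝ) * (((n + 1 - (n + 1) : ℕ) : Polynomial ℝ)
      * (X - 1) ^ (n - (n + 1)) * EP (n + 1)) = 0 := by
    simp
  rw [hlast, add_zero, TT, Finset.mul_sum]
  refine Finset.sum_congr rfl fun j hj => ?_
  simp only [Finset.mem_range] at hj
  have hnat : (n + 1).choose j * (n + 1 - j) = (n + 1) * n.choose j := by
    rw [← Nat.choose_mul_succ_eq n j, Nat.mul_comm]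
  have hcast : (((n + 1).choose j : ℕ) : Polynomial ℝ) * ((n + 1 - j : ℕ) : Polynomial ℝ)
      = ((n + 1 : ℕ) : Polynomial ℝ) * ((n.choose j : ℕ) : Polynomial ℝ) := by
    rw [← Nat.cast_mul, ← Nat.cast_mul, hnat]
  calc (((n + 1).choose j : ℕ) : Polynomial ℝ) * (((n + 1 - j : ℕ) : Polynomial ℝ)
      * (X - 1) ^ (n - j) * EP j)
      = ((((n + 1).choose j : ℕ) : Polynomial ℝ) * ((n + 1 - j : ℕ) : Polynomial ℝ))
        * (X - 1) ^ (n - j) * EP j := by ring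
    _ = ((n + 1 : ℕ) : Polynomial ℝ) * (((n.choose j : ℕ) : Polynomial ℝ)
        * (X - 1) ^ (n - j) * EP j) := by rw [hcast]; ring

lemma SS_expand (n : ℕ) :
    SS (n + 1) = TT (n + 1) + X * (((n + 1 : ℕ) : Polynomial ℝ) * SS n)
      + X * (1 - X) * (derivative (TT (n + 1)) - ((n + 1 : ℕ) : Polynomial ℝ) * TT n) := by
  have hterm : ∀ j ∈ range (n + 2),
      (((n + 1).choose j : ℕ) : Polynomial ℝ) * (X - 1) ^ (n + 1 - j) * EP (j + 1)
      = (((n + 1).choose j : ℕ) : Polynomial ℝ) * (X - 1) ^ (n + 1 - j) * EP j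
        + X * (((j : ℕ) : Polynomial ℝ) * (((n + 1).choose j : ℕ) : Polynomial ℝ)
            * (X - 1) ^ (n + 1 - j) * EP j)
        + X * (1 - X) * ((((n + 1).choose j : ℕ) : Polynomial ℝ) * (X - 1) ^ (n + 1 - j)
            * derivative (EP j)) := by
    intro j hj
    rw [EP_rec j]
    ring
  rw [SS, Finset.sum_congr rfl hterm, Finset.sum_add_distrib, Finset.sum_add_distrib]
  rw [← Finset.mul_sum, ← Finset.mul_sum, F3]
  have hDD : ∑ j ∈ range (n + 2), (((n + 1).choose j : ℕ) : Polynomial ℝ)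
      * (X - 1) ^ (n + 1 - j) * derivative (EP j) = DD n := rfl
  rw [hDD]
  have hTT : ∑ j ∈ range (n + 2), (((n + 1).choose j : ℕ) : Polynomial ℝ)
      * (X - 1) ^ (n + 1 - j) * EP j = TT (n + 1) := rfl
  rw [hTT]
  have hD : DD n = derivative (TT (n + 1)) - ((n + 1 : ℕ) : Polynomial ℝ) * TT n := by
    rw [F4]; ring
  rw [hD]

lemma TT_eq : ∀ n : ℕ, TT (n + 1) = X * EP (n + 1) := by
  have hEP2 : EP 2 = 1 + X := by
    rw [show (2 : ℕ) = 1 + 1 from rfl, EP_rec 1, EP_one]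
    simp
  have base1 : TT 1 = X * EP 1 := by
    rw [TT, EP_one]
    simp [Finset.sum_range_succ, EP_zero, EP_one]
  have base2 : TT 2 = X * EP 2 := by
    rw [TT, hEP2]
    rw [Finset.sum_range_succ, Finset.sum_range_succ, Finset.sum_range_succ,
      Finset.range_zero, Finset.sum_empty]
    rw [EP_zero, EP_one, hEP2]
    norm_num
    ring
  have step : ∀ n : ℕ, TT (n + 1) = X * EP (n + 1) → TT (n + 2) = X * EP (n + 2) →
      TT (n + 3) = X * EP (n + 3) := by
    intro n h1 h2
    have hSSn : SS (n + 1) = TT (n + 2) - (X - 1) * TT (n + 1) := by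
      rw [F1 (n + 1)]; ring
    have hder : derivative (TT (n + 2)) = EP (n + 2) + X * derivative (EP (n + 2)) := by
      rw [h2, derivative_mul, derivative_X, one_mul]
    have : TT (n + 3) = (X - 1) * TT (n + 2) + SS (n + 2) := F1 (n + 2)
    rw [this, SS_expand (n + 1), hSSn, hder, h1, h2]
    rw [show n + 3 = (n + 2) + 1 from rfl, EP_rec (n + 2)]
    push_cast
    ring
  intro n
  induction n using Nat.twoStepInduction with
  | zero => exact base1
  | one => exact base2
  | more m ih1 ih2 => exact step m ih1 ih2

lemma eulerian_top (m : ℕ) : eulerian (m + 1) (m + 1) = 0 := by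
  rw [eulerian_eq_card]
  rw [Finset.card_eq_zero]
  rw [Finset.filter_eq_empty_iff]
  intro σ _
  have := descentCount_le σ
  omega

lemma EP_eval (n : ℕ) (s : ℝ) : (EP n).eval s = eulerianPolyEval n s := by
  cases n with
  | zero => simp [EP_zero, eulerianPolyEval]
  | succ m =>
    rw [EP, eulerianPolyEval]
    rw [Polynomial.eval_finset_sum]
    rw [Finset.sum_range_succ, eulerian_top, Nat.cast_zero, Polynomial.C_0, zero_mul,
      Polynomial.eval_zero, add_zero]
    refine Finset.sum_congr rfl fun k hk => ?_
    simp

lemma key_identity (n : ℕ) (s : ℝ) :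
    ∑ k ∈ range (n + 2), ((n + 1).choose k : ℝ) * (s - 1) ^ (n + 1 - k) * eulerianPolyEval k s
      = s * eulerianPolyEval (n + 1) s := by
  have h := TT_eq n
  have he := congrArg (Polynomial.eval s) h
  rw [TT] at he
  rw [Polynomial.eval_finset_sum, Polynomial.eval_mul, Polynomial.eval_X, EP_eval] at he
  rw [← he]
  refine Finset.sum_congr rfl fun k hk => ?_
  rw [Polynomial.eval_mul, Polynomial.eval_mul, Polynomial.eval_pow, Polynomial.eval_sub,
    Polynomial.eval_X, Polynomial.eval_one, Polynomial.eval_natCast, EP_eval]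

/-- Euler's generating function of the Eulerian polynomials:
`E(X) = ∑_{n≥0} A_n(s) X^n/n!` satisfies `E(X)·(s - e^{(s-1)X}) = (s-1)·1`. -/
theorem eulerian_poly_egf (s : ℝ) :
    (PowerSeries.mk fun n => eulerianPolyEval n s / n.factorial) *
      (PowerSeries.C s - expc (s - 1)) = PowerSeries.C (s - 1) * 1 := by
  rw [mul_one]
  ext n
  rw [PowerSeries.coeff_mul, Finset.Nat.sum_antidiagonal_eq_sum_range_succ_mk]
  have hco : ∀ j : ℕ, (PowerSeries.coeff j) (PowerSeries.C s - expc (s - 1)) =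
      (if j = 0 then s else 0) - (s - 1) ^ j / j.factorial := by
    intro j
    rw [map_sub, PowerSeries.coeff_C, expc, PowerSeries.coeff_rescale, PowerSeries.coeff_exp]
    congr 1
    rw [map_div₀, map_one, map_natCast]
    ring
  cases n with
  | zero =>
    simp only [Finset.range_one, Finset.sum_singleton, Nat.sub_zero, PowerSeries.coeff_mk, hco,
      PowerSeries.coeff_C]
    norm_num [eulerianPolyEval]
  | succ N =>
    rw [PowerSeries.coeff_C, if_neg (Nat.succ_ne_zero N)]
    have hterm : ∀ k ∈ range (N + 2),
        (PowerSeries.coeff k) (PowerSeries.mk fun n => eulerianPolyEval n s / n.factorial) *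
          (PowerSeries.coeff (N + 1 - k)) (PowerSeries.C s - expc (s - 1))
        = (if k = N + 1 then s * eulerianPolyEval (N + 1) s / (N + 1).factorial else 0)
          - ((N + 1).choose k : ℝ) * (s - 1) ^ (N + 1 - k) * eulerianPolyEval k s
            / (N + 1).factorial := by
      intro k hk
      simp only [Finset.mem_range] at hk
      have hkle : k ≤ N + 1 := by omega
      rw [PowerSeries.coeff_mk, hco]
      have hchoose : ((N + 1).choose k : ℝ) = ((N + 1).factorial : ℝ) /
          ((k.factorial : ℝ) * (((N + 1 - k)).factorial : ℝ)) := Nat.cast_choose ℝ hkle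
      have hf1 : (k.factorial : ℝ) ≠ 0 := Nat.cast_ne_zero.mpr (Nat.factorial_ne_zero k)
      have hf2 : (((N + 1 - k)).factorial : ℝ) ≠ 0 :=
        Nat.cast_ne_zero.mpr (Nat.factorial_ne_zero _)
      have hf3 : (((N + 1)).factorial : ℝ) ≠ 0 :=
        Nat.cast_ne_zero.mpr (Nat.factorial_ne_zero _)
      by_cases hkN : k = N + 1
      · subst hkN
        rw [if_pos rfl, if_pos (by omega)]
        rw [hchoose]
        have : N + 1 - (N + 1) = 0 := by omega
        rw [this]
        simp only [Nat.factorial_zero, Nat.cast_one, mul_one, pow_zero]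
        field_simp
      · rw [if_neg hkN, if_neg (by omega)]
        rw [hchoose]
        field_simp
        ring
    rw [Finset.sum_congr rfl hterm, Finset.sum_sub_distrib]
    rw [← Finset.sum_div, key_identity N s]
    rw [Finset.sum_ite_eq' (range (N + 2)) (N + 1)
      (fun _ => s * eulerianPolyEval (N + 1) s / ((N + 1).factorial : ℝ))]
    rw [if_pos (by simp [Finset.mem_range])]
    ring
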